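/- arXiv:2012.13787 — 2 statements merged into one kernel-verified Lean document; each statement's English description precedes it below -/
import Mathlib

section
/- Let X₁, …, X_k be independent real-valued random variables, each with a continuous (atomless) cumulative distribution function, and let P be a nonzero polynomial in k variables with real coefficients and finite degree. Then Pr{P(X₁, …, X_k) = 0} = 0. -/
/-!
By independence the law of `(X 1, …, X k)` is the product of the marginals, so it suffices to
show that the zero set of `P ≠ 0` is null for a product of atomless measures. Induct on the
number of variables, viewing `P` as a polynomial in the first one: off the zero set of its
leading coefficient, which is null by induction, the section is the finite root set of a nonzero
one-variable polynomial, hence null for an atomless measure; Tonelli concludes.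
-/

open MeasureTheory ProbabilityTheory

namespace MvPolynomial

theorem measurableSet_setOf_eval_eq_zero {n : ℕ} (P : MvPolynomial (Fin n) ℝ) :
    MeasurableSet {x : Fin n → ℝ | eval x P = 0} :=
  measurableSet_eq_fun (continuous_eval P).measurable measurable_const

theorem measure_setOf_eval_cons_eq_zero {n : ℕ} (ν : Measure ℝ) [NullSingletonClass ν]
    {P : MvPolynomial (Fin (n + 1)) ℝ} {y : Fin n → ℝ}
    (hy : eval y (finSuccEquiv ℝ n P).leadingCoeff ≠ 0) :
    ν {a | eval (Fin.cons a y) P = 0} = 0 := by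
  set Q := (finSuccEquiv ℝ n P).map (eval y)
  have hQ : Q ≠ 0 := by
    rw [← Polynomial.leadingCoeff_ne_zero,
      Polynomial.leadingCoeff_map_of_leadingCoeff_ne_zero _ hy]
    exact hy
  have hroots : {a | eval (Fin.cons a y) P = 0} = {a | Q.IsRoot a} := by
    ext a
    simp only [Set.mem_ofPred_eq, eval_eq_eval_mv_eval', Polynomial.IsRoot.def, Q]
  rw [hroots]
  exact (Polynomial.finite_setOfPred_isRoot hQ).countable.measure_zero ν

theorem measure_pi_setOf_eval_eq_zero {n : ℕ} (ν : Fin n → Measure ℝ)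
    [∀ i, SigmaFinite (ν i)] [∀ i, NullSingletonClass (ν i)]
    {P : MvPolynomial (Fin n) ℝ} (hP : P ≠ 0) :
    Measure.pi ν {x | eval x P = 0} = 0 := by
  induction n with
  | zero =>
    obtain ⟨r, rfl⟩ := C_surjective (Fin 0) P
    have hr : r ≠ 0 := by simpa using hP
    simp [hr]
  | succ n ih =>
    set Q := finSuccEquiv ℝ n P
    have hQ : Q ≠ 0 := (map_ne_zero_iff _ (finSuccEquiv ℝ n).injective).mpr hP
    set ν' : Fin n → Measure ℝ := fun j => ν (Fin.succ j)
    have hlead : ∀ᵐ y ∂Measure.pi ν', eval y Q.leadingCoeff ≠ 0 := by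
      rw [ae_iff]
      simpa using ih ν' (Polynomial.leadingCoeff_ne_zero.mpr hQ)
    set e := MeasurableEquiv.piFinSuccAbove (fun _ => ℝ) 0
    set T := e.symm ⁻¹' {x | eval x P = 0}
    have hT : MeasurableSet T := e.symm.measurable (measurableSet_setOf_eval_eq_zero P)
    have hpi : Measure.pi ν {x | eval x P = 0} = (ν 0).prod (Measure.pi ν') T :=
      ((measurePreserving_piFinSuccAbove ν 0).symm e).measure_preimage
        (measurableSet_setOf_eval_eq_zero P).nullMeasurableSet |>.symm
    have hsection : ∀ y, (fun a => (a, y)) ⁻¹' T = {a | eval (Fin.cons a y) P = 0} := by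
      intro y
      ext a
      simp [T, e, Fin.consEquiv]
    rw [hpi, Measure.prod_apply_symm hT]
    refine (lintegral_congr_ae ?_).trans lintegral_zero
    filter_upwards [hlead] with y hy
    rw [hsection]
    exact measure_setOf_eval_cons_eq_zero (ν 0) hy

end MvPolynomial

/-- If `X 1, …, X k` are independent real random variables, each with a continuous
(atomless) cumulative distribution function, and `P` is a nonzero real polynomial in
`k` variables, then `P(X 1, …, X k) = 0` with probability zero. -/
theorem polynomial_zero_prob_zero
    {Ω : Type*} [MeasurableSpace Ω] (μ : Measure Ω) [IsProbabilityMeasure μ]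
    (k : ℕ) (X : Fin k → Ω → ℝ) (hmeas : ∀ i, Measurable (X i))
    (hindep : iIndepFun X μ)
    (hcont : ∀ i (x : ℝ), μ {ω | X i ω = x} = 0)
    (P : MvPolynomial (Fin k) ℝ) (hP : P ≠ 0) :
    μ {ω | MvPolynomial.eval (fun i => X i ω) P = 0} = 0 := by
  have hatomless : ∀ i, NullSingletonClass (μ.map (X i)) := fun i =>
    ⟨fun x => (Measure.map_apply (hmeas i) (measurableSet_singleton x)).trans (hcont i x)⟩
  have hlaw : μ.map (fun ω i => X i ω) = Measure.pi fun i => μ.map (X i) :=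
    hindep.map_fun_eq_pi_map fun i => (hmeas i).aemeasurable
  calc μ {ω | MvPolynomial.eval (fun i => X i ω) P = 0}
      = μ.map (fun ω i => X i ω) {x | MvPolynomial.eval x P = 0} :=
        (Measure.map_apply (measurable_pi_lambda _ hmeas)
          (MvPolynomial.measurableSet_setOf_eval_eq_zero P)).symm
    _ = 0 := by
        rw [hlaw]
        exact MvPolynomial.measure_pi_setOf_eval_eq_zero _ hP
end

section
/- Let P⁽¹⁾, …, P⁽ᴶ⁾ be nonzero, linearly independent rational functions (quotients of polynomials with nonzero denominator) in a finite family of variables, and let 𝒳₁, …, 𝒳_J be J disjoint copies of those variables. Then the determinant of the J×J matrix A with entries A_{i,j} = P⁽ʲ⁾(𝒳_i) is a nonzero rational function of the combined variables. -/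
/-!
Clearing a common denominator `d` turns the `P j` into linearly independent polynomials `p j`,
and row `i` of the matrix gets multiplied by the `i`-th copy of `d`, so it suffices to show
that `det (p j (𝒳ᵢ))` is a nonzero polynomial. Over the infinite field `ℝ`, polynomials are
determined by their values, so the `p j` are linearly independent as functions on `ℝ^σ`. For
linearly independent functions, the vectors `(p j (x))ⱼ` span `ℝ^J` (a functional vanishing on
all of them gives a linear relation), so `J` of them form a basis, and at those points `x i`
the determinant does not vanish.
-/

open MvPolynomial

section Evaluation

variable {K X ι : Type*} [Field K] [Fintype ι]

theorem span_range_eval_eq_top_of_linearIndependent {f : ι → X → K}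
    (hf : LinearIndependent K f) : Submodule.span K (Set.range fun x j => f j x) = ⊤ := by
  classical
  rw [← Submodule.dualAnnihilator_eq_bot_iff, eq_bot_iff]
  intro g hg
  rw [Submodule.mem_dualAnnihilator] at hg
  have hsum : ∑ j, g (fun k => if j = k then 1 else 0) • f j = 0 := by
    funext x
    have := hg _ (Submodule.subset_span (Set.mem_range_self x))
    rw [LinearMap.pi_apply_eq_sum_univ] at this
    simpa [mul_comm, eq_comm] using this
  have hcoeff := Fintype.linearIndependent_iff.1 hf _ hsum
  refine (Submodule.mem_bot K).2 (LinearMap.ext fun w => ?_)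
  simp [LinearMap.pi_apply_eq_sum_univ g w, hcoeff]

theorem exists_linearIndependent_comp_of_span_eq_top {v : X → ι → K}
    (hv : Submodule.span K (Set.range v) = ⊤) : ∃ x : ι → X, LinearIndependent K (v ∘ x) := by
  obtain ⟨κ, a, -, hspan, hli⟩ := exists_linearIndependent' K v
  let e : ι ≃ κ := (Pi.basisFun K ι).indexEquiv (Module.Basis.mk hli (by rw [hspan, hv]))
  exact ⟨a ∘ e, hli.comp e e.injective⟩

theorem exists_det_ne_zero_of_linearIndependent [DecidableEq ι] {f : ι → X → K}
    (hf : LinearIndependent K f) : ∃ x : ι → X, (Matrix.of fun i j => f j (x i)).det ≠ 0 := by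
  obtain ⟨x, hx⟩ :=
    exists_linearIndependent_comp_of_span_eq_top (span_range_eval_eq_top_of_linearIndependent hf)
  exact ⟨x, (Matrix.isUnit_iff_isUnit_det _).1 (Matrix.linearIndependent_rows_iff_isUnit.1 hx)
    |>.ne_zero⟩

end Evaluation

theorem MvPolynomial.linearIndependent_eval_of_linearIndependent {K σ ι : Type*} [Field K]
    [Infinite K] {p : ι → MvPolynomial σ K} (hp : LinearIndependent K p) :
    LinearIndependent K fun j (x : σ → K) => eval x (p j) := by
  let E : MvPolynomial σ K →ₗ[K] (σ → K) → K :=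
    { toFun := fun q x => eval x q
      map_add' := by intro a b; funext x; simp
      map_smul' := by intro c a; funext x; simp }
  exact hp.map' E (LinearMap.ker_eq_bot_of_injective fun q r h => MvPolynomial.funext (congrFun h))

theorem MvPolynomial.det_rename_disjoint_copies_ne_zero {K σ ι : Type*} [Field K] [Infinite K]
    [Fintype ι] [DecidableEq ι] {p : ι → MvPolynomial σ K} (hp : LinearIndependent K p) :
    (Matrix.of fun i j => rename (fun s => (s, i)) (p j)).det ≠ 0 := by
  obtain ⟨x, hx⟩ :=
    exists_det_ne_zero_of_linearIndependent (linearIndependent_eval_of_linearIndependent hp)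
  intro h
  apply hx
  -- evaluating the `i`-th copy of the variables at the point `x i` recovers the matrix of values
  have := congrArg (eval fun q : σ × ι => x q.2 q.1) h
  rw [RingHom.map_det, map_zero] at this
  rw [← this]
  congr 1
  ext i j
  simp [eval_rename, Function.comp_def]

theorem LinearIndependent.of_algebraMap_eq_mul {k R L ι : Type*} [CommRing k] [CommRing R]
    [CommRing L] [IsDomain L] [Algebra k R] [Algebra k L] [Algebra R L] [IsScalarTower k R L]
    {P : ι → L} {p : ι → R} {c : L}
    (hP : LinearIndependent k P) (hc : c ≠ 0) (hp : ∀ j, algebraMap R L (p j) = c * P j) :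
    LinearIndependent k p := by
  refine LinearIndependent.of_comp (IsScalarTower.toAlgHom k R L).toLinearMap ?_
  have : (IsScalarTower.toAlgHom k R L).toLinearMap ∘ p = LinearMap.mulLeft k c ∘ P := by
    funext j; exact hp j
  rw [this]
  exact hP.map' _ (LinearMap.ker_eq_bot_of_injective (mul_right_injective₀ hc))

theorem det_of_rational_functions_on_disjoint_copies_ne_zero_general
    (σ : Type*) (J : ℕ)
    (P : Fin J → FractionRing (MvPolynomial σ ℝ))
    (hPli : LinearIndependent ℝ P)
    (φ : Fin J →
      (FractionRing (MvPolynomial σ ℝ) →+* FractionRing (MvPolynomial (σ × Fin J) ℝ)))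
    (hφ : ∀ (i : Fin J) (p : MvPolynomial σ ℝ),
      φ i (algebraMap (MvPolynomial σ ℝ) (FractionRing (MvPolynomial σ ℝ)) p) =
        algebraMap (MvPolynomial (σ × Fin J) ℝ) (FractionRing (MvPolynomial (σ × Fin J) ℝ))
          (MvPolynomial.rename (fun s => (s, i)) p)) :
    Matrix.det (Matrix.of fun i j : Fin J => φ i (P j)) ≠ 0 := by
  obtain ⟨d, hd⟩ :=
    IsLocalization.exist_integer_multiples_of_finite (nonZeroDivisors (MvPolynomial σ ℝ)) P
  choose p hp using hd
  have hpP : ∀ j, algebraMap _ _ (p j) = algebraMap _ _ (d : MvPolynomial σ ℝ) * P j :=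
    fun j => by rw [hp j, Algebra.smul_def]
  have hpli :=
    hPli.of_algebraMap_eq_mul (IsFractionRing.to_map_ne_zero_of_mem_nonZeroDivisors d.2) hpP
  have hrow : ∀ i j, algebraMap _ _ (rename (fun s => (s, i)) (p j)) =
      algebraMap _ (FractionRing (MvPolynomial (σ × Fin J) ℝ))
        (rename (fun s => (s, i)) (d : MvPolynomial σ ℝ)) * φ i (P j) := by
    intro i j
    rw [← hφ, ← hφ, ← map_mul, hpP]
  intro hdet
  apply det_rename_disjoint_copies_ne_zero hpli
  refine (map_eq_zero_iff _
    (IsFractionRing.injective _ (FractionRing (MvPolynomial (σ × Fin J) ℝ)))).1 ?_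
  rw [RingHom.map_det, RingHom.mapMatrix_apply]
  simp only [Matrix.map, Matrix.of_apply, hrow]
  exact (Matrix.det_mul_column _ (Matrix.of fun i j => φ i (P j))).trans (by rw [hdet, mul_zero])

/-- Let `P 1, …, P J` be nonzero, linearly independent rational functions in a finite
family of variables `σ`, and for each `i` let `φ i` be the embedding of rational
functions in the variables `σ` into rational functions in the combined variables
`σ × Fin J` which substitutes, for each variable `s`, the `i`-th copy `(s, i)`.
Then the determinant of the `J × J` matrix with entries `φ i (P j)` is a nonzero
rational function of the combined variables. -/
theorem det_of_rational_functions_on_disjoint_copies_ne_zero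
    (σ : Type*) [Fintype σ] (J : ℕ)
    (P : Fin J → FractionRing (MvPolynomial σ ℝ))
    (hP0 : ∀ j, P j ≠ 0)
    (hPli : LinearIndependent ℝ P)
    (φ : Fin J →
      (FractionRing (MvPolynomial σ ℝ) →+* FractionRing (MvPolynomial (σ × Fin J) ℝ)))
    (hφ : ∀ (i : Fin J) (p : MvPolynomial σ ℝ),
      φ i (algebraMap (MvPolynomial σ ℝ) (FractionRing (MvPolynomial σ ℝ)) p) =
        algebraMap (MvPolynomial (σ × Fin J) ℝ) (FractionRing (MvPolynomial (σ × Fin J) ℝ))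
          (MvPolynomial.rename (fun s => (s, i)) p)) :
    Matrix.det (Matrix.of fun i j : Fin J => φ i (P j)) ≠ 0 :=
  det_of_rational_functions_on_disjoint_copies_ne_zero_general σ J P hPli φ hφ
end
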